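/- Let m be a positive integer and F a finite set of faces (unordered triples of distinct indices in Fin m). For an admissible metric u : Fin m → ℝ (u_e > 0 everywhere and, for each face {i,j,k} ∈ F, the lengths d_i = √(2u_i), d_j = √(2u_j), d_k = √(2u_k) satisfy the strict triangle inequalities), define the cotangent edge weight w_e(u) = (1/2) Σ over faces of F containing e of cot θ_e, where θ_e is the angle opposite edge e in that face, given by cos θ_i = (d_j² + d_k² − d_i²)/(2 d_j d_k). Then there exists a differentiable function E on the open set of admissible metrics with ∂E/∂u_e (u) = 2 w_e(u) for every admissible u and every edge e. -/

import Mathlib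

/-- `u` is an admissible metric: `u_e > 0` for every edge, and on each face the
lengths `d_e = √(2 u_e)` satisfy the strict triangle inequalities. -/
def AdmissibleMetric (m : ℕ) (F : Finset (Finset (Fin m))) (u : Fin m → ℝ) : Prop :=
  (∀ e, 0 < u e) ∧
  ∀ f ∈ F, ∀ i ∈ f, ∀ j ∈ f, ∀ k ∈ f, i ≠ j → i ≠ k → j ≠ k →
    Real.sqrt (2 * u i) < Real.sqrt (2 * u j) + Real.sqrt (2 * u k)

/-- The angle opposite edge `e` in face `f`, determined by the law of cosines:
`cos θ_i = (d_j² + d_k² − d_i²)/(2 d_j d_k)` where `{j,k} = f \ {e}` and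
`d_a = √(2 u_a)` (so `d_a² = 2 u_a`). -/
noncomputable def faceAngle (m : ℕ) (u : Fin m → ℝ) (f : Finset (Fin m)) (e : Fin m) : ℝ :=
  Real.arccos ((∑ a ∈ f.erase e, 2 * u a - 2 * u e) /
    (2 * ∏ a ∈ f.erase e, Real.sqrt (2 * u a)))

/-- The cotangent edge weight
`w_e(u) = (1/2) Σ_{f ∈ F, e ∈ f} cot θ_e^f`. -/
noncomputable def cotWeight (m : ℕ) (F : Finset (Finset (Fin m)))
    (u : Fin m → ℝ) (e : Fin m) : ℝ :=
  (1 / 2) * ∑ f ∈ F.filter (fun f => e ∈ f), Real.cot (faceAngle m u f e)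

/-! With `d_a² = 2 u_a`, Heron's formula gives `16 · area(f)² = 4 Q_f(u)` where
`Q_f(u) = (Σ_{a ∈ f} u_a)² - 2 Σ_{a ∈ f} u_a²`, so `E = Σ_f √Q_f` is twice the total area.
For `f = {e, j, k}` one has `∂_e √Q_f = (u_j + u_k - u_e) / √Q_f`, which is `cot θ_e`: by the
law of cosines `cos θ_e = (u_j + u_k - u_e) / (d_j d_k)`, while
`sin θ_e = 2 · area(f) / (d_j d_k) = √Q_f / (d_j d_k)`. -/

open Finset Real

-- Holds for all `x`: where `arccos` saturates, both sides are `0` by division by zero.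
lemma Real.cot_arccos (x : ℝ) : cot (arccos x) = x / √(1 - x ^ 2) := by
  rw [cot_eq_cos_div_sin, ← inv_div, ← tan_eq_sin_div_cos, tan_arccos, inv_div]

lemma cot_arccos_lawOfCosines {x y z : ℝ} (hy : 0 < y) (hz : 0 < z) :
    cot (arccos ((y ^ 2 + z ^ 2 - x ^ 2) / (2 * (y * z)))) =
      (y ^ 2 + z ^ 2 - x ^ 2) / √(4 * y ^ 2 * z ^ 2 - (y ^ 2 + z ^ 2 - x ^ 2) ^ 2) := by
  have hd : 0 < 2 * (y * z) := by positivity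
  have h1 : 1 - ((y ^ 2 + z ^ 2 - x ^ 2) / (2 * (y * z))) ^ 2 =
      (4 * y ^ 2 * z ^ 2 - (y ^ 2 + z ^ 2 - x ^ 2) ^ 2) / (2 * (y * z)) ^ 2 := by
    field_simp
    ring
  rw [cot_arccos, h1, sqrt_div' _ (sq_nonneg _), sqrt_sq hd.le, div_div_div_cancel_right₀ hd.ne']

lemma heron_pos {x y z : ℝ} (hx : x < y + z) (hy : y < x + z) (hz : z < x + y) :
    0 < 4 * y ^ 2 * z ^ 2 - (y ^ 2 + z ^ 2 - x ^ 2) ^ 2 := by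
  have hxyz : 0 < x + y + z := by linarith
  calc (0 : ℝ) < (x + y + z) * (y + z - x) * (x + z - y) * (x + y - z) := by
        have := sub_pos.2 hx; have := sub_pos.2 hy; have := sub_pos.2 hz
        positivity
    _ = _ := by ring

lemma Finset.exists_eq_insert_pair_of_card_eq_three {α : Type*} [DecidableEq α] {s : Finset α}
    {a : α} (hs : s.card = 3) (ha : a ∈ s) :
    ∃ b c, a ≠ b ∧ a ≠ c ∧ b ≠ c ∧ s = {a, b, c} := by
  have hcard : (s.erase a).card = 2 := by rw [card_erase_of_mem ha, hs]
  obtain ⟨b, c, hbc, hs'⟩ := card_eq_two.1 hcard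
  have hb : b ∈ s.erase a := by simp [hs']
  have hc : c ∈ s.erase a := by simp [hs']
  exact ⟨b, c, (ne_of_mem_erase hb).symm, (ne_of_mem_erase hc).symm, hbc,
    by rw [← hs', insert_erase ha]⟩

section faceQuad

variable {ι : Type*}

noncomputable def faceQuad (f : Finset ι) (u : ι → ℝ) : ℝ :=
  (∑ a ∈ f, u a) ^ 2 - 2 * ∑ a ∈ f, u a ^ 2

noncomputable def faceQuadDeriv (f : Finset ι) (u : ι → ℝ) : (ι → ℝ) →L[ℝ] ℝ :=
  ∑ a ∈ f, (2 * (∑ b ∈ f, u b - 2 * u a)) • ContinuousLinearMap.proj a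

lemma hasFDerivAt_faceQuad [Fintype ι] (f : Finset ι) (u : ι → ℝ) :
    HasFDerivAt (faceQuad f) (faceQuadDeriv f u) u := by
  have hsum : HasFDerivAt (fun v : ι → ℝ => ∑ a ∈ f, v a)
      (∑ a ∈ f, ContinuousLinearMap.proj a) u :=
    HasFDerivAt.fun_sum fun a _ => hasFDerivAt_apply (𝕜 := ℝ) a u
  have hsq : HasFDerivAt (fun v : ι → ℝ => ∑ a ∈ f, v a ^ 2)
      (∑ a ∈ f, (2 * u a) • ContinuousLinearMap.proj a) u :=
    HasFDerivAt.fun_sum fun a _ => by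
      simpa using (hasFDerivAt_apply (𝕜 := ℝ) a u).pow 2
  refine ((hsum.pow 2).sub (hsq.const_mul 2)).congr_fderiv ?_
  ext v
  simp only [faceQuadDeriv, sub_apply, smul_apply,
    _root_.sum_apply, ContinuousLinearMap.proj_apply, smul_eq_mul, nsmul_eq_mul,
    Nat.cast_ofNat, Nat.add_one_sub_one, pow_one, mul_sum, sum_mul, ← sum_sub_distrib]
  refine sum_congr rfl fun a _ => ?_
  rw [← sum_mul, ← mul_sum]
  ring

lemma faceQuadDeriv_single [DecidableEq ι] (f : Finset ι) (u : ι → ℝ) (e : ι) :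
    faceQuadDeriv f u (Pi.single e 1) = if e ∈ f then 2 * (∑ b ∈ f, u b - 2 * u e) else 0 := by
  simp [faceQuadDeriv, Pi.single_apply]

lemma faceQuad_triple [DecidableEq ι] {a b c : ι} (hab : a ≠ b) (hac : a ≠ c) (hbc : b ≠ c)
    (u : ι → ℝ) :
    faceQuad {a, b, c} u = (u a + u b + u c) ^ 2 - 2 * (u a ^ 2 + u b ^ 2 + u c ^ 2) := by
  simp [faceQuad, hab, hac, hbc, add_assoc]

end faceQuad

section areaEnergy

variable {ι : Type*}

noncomputable def areaEnergy (F : Finset (Finset ι)) (u : ι → ℝ) : ℝ :=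
  ∑ f ∈ F, √(faceQuad f u)

variable [Fintype ι] {F : Finset (Finset ι)} {u : ι → ℝ}

lemma hasFDerivAt_areaEnergy (hQ : ∀ f ∈ F, 0 < faceQuad f u) :
    HasFDerivAt (areaEnergy F) (∑ f ∈ F, (1 / (2 * √(faceQuad f u))) • faceQuadDeriv f u) u :=
  HasFDerivAt.fun_sum fun f hf =>
    (hasDerivAt_sqrt (hQ f hf).ne').comp_hasFDerivAt u (hasFDerivAt_faceQuad f u)

lemma fderiv_areaEnergy_single [DecidableEq ι] (hQ : ∀ f ∈ F, 0 < faceQuad f u) (e : ι) :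
    fderiv ℝ (areaEnergy F) u (Pi.single e 1) =
      ∑ f ∈ F with e ∈ f, (∑ a ∈ f, u a - 2 * u e) / √(faceQuad f u) := by
  rw [(hasFDerivAt_areaEnergy hQ).fderiv, sum_filter]
  simp only [_root_.sum_apply, smul_apply, smul_eq_mul, faceQuadDeriv_single]
  refine sum_congr rfl fun f _ => ?_
  split_ifs
  · field_simp
  · rw [mul_zero]

end areaEnergy

lemma faceQuad_pos {m : ℕ} {F : Finset (Finset (Fin m))} {u : Fin m → ℝ}
    (hu : AdmissibleMetric m F u) {f : Finset (Fin m)} (hf : f ∈ F) (hcard : f.card = 3) :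
    0 < faceQuad f u := by
  obtain ⟨hpos, htri⟩ := hu
  obtain ⟨i, j, k, hij, hik, hjk, rfl⟩ := card_eq_three.1 hcard
  have hi : i ∈ ({i, j, k} : Finset (Fin m)) := by simp
  have hj : j ∈ ({i, j, k} : Finset (Fin m)) := by simp
  have hk : k ∈ ({i, j, k} : Finset (Fin m)) := by simp
  have hsq (a : Fin m) : √(2 * u a) ^ 2 = 2 * u a := sq_sqrt (by linarith [hpos a])
  have hheron := heron_pos (htri _ hf i hi j hj k hk hij hik hjk)
    (htri _ hf j hj i hi k hk hij.symm hjk hik) (htri _ hf k hk i hi j hj hik.symm hjk.symm hij)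
  rw [hsq, hsq, hsq] at hheron
  rw [faceQuad_triple hij hik hjk]
  linarith

lemma cot_faceAngle {m : ℕ} {u : Fin m → ℝ} (hu : ∀ a, 0 < u a) {f : Finset (Fin m)}
    (hcard : f.card = 3) {e : Fin m} (he : e ∈ f) :
    cot (faceAngle m u f e) = (∑ a ∈ f, u a - 2 * u e) / √(faceQuad f u) := by
  obtain ⟨j, k, hej, hek, hjk, rfl⟩ := exists_eq_insert_pair_of_card_eq_three hcard he
  have herase : ({e, j, k} : Finset (Fin m)).erase e = {j, k} :=
    erase_insert (by simp [hej, hek])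
  have hsq (a : Fin m) : √(2 * u a) ^ 2 = 2 * u a := sq_sqrt (by linarith [hu a])
  have hlen (a : Fin m) : 0 < √(2 * u a) := sqrt_pos.2 (by linarith [hu a])
  have hlaw := cot_arccos_lawOfCosines (x := √(2 * u e)) (hlen j) (hlen k)
  rw [hsq, hsq, hsq] at hlaw
  rw [faceAngle, herase, sum_pair hjk, prod_pair hjk, faceQuad_triple hej hek hjk,
    sum_insert (by simp [hej, hek]), sum_pair hjk]
  have hrad : 4 * (2 * u j) * (2 * u k) - (2 * u j + 2 * u k - 2 * u e) ^ 2 =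
      2 ^ 2 * ((u e + u j + u k) ^ 2 - 2 * (u e ^ 2 + u j ^ 2 + u k ^ 2)) := by ring
  rw [hlaw, hrad, sqrt_mul (by norm_num), sqrt_sq zero_le_two,
    show 2 * u j + 2 * u k - 2 * u e = 2 * (u e + (u j + u k) - 2 * u e) by ring,
    mul_div_mul_left _ _ two_ne_zero]

theorem exists_energy_with_gradient_cotWeight_general (m : ℕ)
    (F : Finset (Finset (Fin m))) (hF : ∀ f ∈ F, f.card = 3) :
    ∃ E : (Fin m → ℝ) → ℝ, ∀ u : Fin m → ℝ, AdmissibleMetric m F u →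
      DifferentiableAt ℝ E u ∧
      ∀ e : Fin m, fderiv ℝ E u (Pi.single e 1) = 2 * cotWeight m F u e := by
  refine ⟨areaEnergy F, fun u hu => ?_⟩
  have hQ : ∀ f ∈ F, 0 < faceQuad f u := fun f hf => faceQuad_pos hu hf (hF f hf)
  refine ⟨(hasFDerivAt_areaEnergy hQ).differentiableAt, fun e => ?_⟩
  rw [fderiv_areaEnergy_single hQ, cotWeight, ← mul_assoc, mul_one_div_cancel two_ne_zero, one_mul]
  refine sum_congr rfl fun f hf => ?_
  rw [mem_filter] at hf
  exact (cot_faceAngle hu.1 (hF f hf.1) hf.2).symm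

/-- There is a differentiable energy `E` on the open set of
admissible metrics whose partial derivatives are twice the cotangent edge
weights: `∂E/∂u_e = 2 w_e(u)`. -/
theorem exists_energy_with_gradient_cotWeight (m : ℕ) (hm : 0 < m)
    (F : Finset (Finset (Fin m))) (hF : ∀ f ∈ F, f.card = 3) :
    ∃ E : (Fin m → ℝ) → ℝ, ∀ u : Fin m → ℝ, AdmissibleMetric m F u →
      DifferentiableAt ℝ E u ∧
      ∀ e : Fin m, fderiv ℝ E u (Pi.single e 1) = 2 * cotWeight m F u e :=
  exists_energy_with_gradient_cotWeight_general m F hF
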